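/- arXiv:2106.05650 — 6 statements merged into one kernel-verified Lean document; each statement's English description precedes it below -/
import Mathlib

section
/- The Beltrami-Klein map f is injective on the closed upper half-plane {z ∈ ℂ : Im(z) ≥ 0}. -/
/-- The Beltrami-Klein map `f(z) = 1 - 2(1 + i·Re z)/(1 + |z|²)`. -/
noncomputable def bkMap (z : ℂ) : ℂ :=
  1 - 2 * (1 + Complex.I * z.re) / (1 + ‖z‖ ^ 2)

/-!
The real part `1 - 2/(1 + |z|²)` of `bkMap z` determines `|z|`; given `|z|`, the imaginary part
`-2 Re z/(1 + |z|²)` determines `Re z`. A point of the closed upper half-plane is determined by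
its real part and its modulus.
-/

lemma bkMap_eq_mk (z : ℂ) :
    bkMap z = ⟨1 - 2 / (1 + ‖z‖ ^ 2), -2 * z.re / (1 + ‖z‖ ^ 2)⟩ := by
  have : (1 + (‖z‖ : ℂ) ^ 2) ≠ 0 := by exact_mod_cast (by positivity : (1 + ‖z‖ ^ 2 : ℝ) ≠ 0)
  rw [bkMap, Complex.mk_eq_add_mul_I]
  push_cast
  field_simp
  ring

lemma bkMap_re (z : ℂ) : (bkMap z).re = 1 - 2 / (1 + ‖z‖ ^ 2) := by
  rw [bkMap_eq_mk]

lemma bkMap_im (z : ℂ) : (bkMap z).im = -2 * z.re / (1 + ‖z‖ ^ 2) := by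
  rw [bkMap_eq_mk]

lemma norm_eq_of_bkMap_eq {z w : ℂ} (h : bkMap z = bkMap w) : ‖z‖ = ‖w‖ := by
  have hre := congrArg Complex.re h
  rw [bkMap_re, bkMap_re, sub_right_inj, div_eq_mul_inv, div_eq_mul_inv,
    mul_right_inj' two_ne_zero, inv_inj, add_right_inj] at hre
  exact (pow_left_inj₀ (norm_nonneg z) (norm_nonneg w) two_ne_zero).mp hre

lemma re_eq_of_bkMap_eq {z w : ℂ} (h : bkMap z = bkMap w) : z.re = w.re := by
  have him := congrArg Complex.im h
  rw [bkMap_im, bkMap_im, norm_eq_of_bkMap_eq h,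
    div_left_inj' (by positivity), mul_right_inj' (by norm_num)] at him
  exact him

lemma Complex.ext_of_im_nonneg {z w : ℂ} (hz : 0 ≤ z.im) (hw : 0 ≤ w.im) (hre : z.re = w.re)
    (hnorm : ‖z‖ = ‖w‖) : z = w := by
  have hsq : z.im ^ 2 = w.im ^ 2 := by
    have := congrArg (· ^ 2) hnorm
    simp only [Complex.sq_norm, Complex.normSq_apply, hre] at this
    linarith
  exact Complex.ext hre ((pow_left_inj₀ hz hw two_ne_zero).mp hsq)

theorem bkMap_injOn_upper_half_plane : Set.InjOn bkMap {z : ℂ | 0 ≤ z.im} :=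
  fun _ hz _ hw h => Complex.ext_of_im_nonneg hz hw (re_eq_of_bkMap_eq h) (norm_eq_of_bkMap_eq h)
end

section
/- Let H be a complex inner product space, and let x, y ∈ H with x ≠ 0 and y ≠ 0. Let w = (‖y‖/‖x‖)·exp(i·arccos(Re⟨y, x⟩/(‖y‖·‖x‖))). Then f(w) = (‖y‖² - ‖x‖² - i·(⟨y, x⟩ + ⟨x, y⟩)) / (‖x‖² + ‖y‖²). -/
/-!
The point `w` has modulus `‖y‖ / ‖x‖`, and by Cauchy–Schwarz `cos ∘ arccos` acts as the identity
on `Re⟪x, y⟫ / (‖y‖ ‖x‖)`, so `Re w = Re⟪x, y⟫ / ‖x‖²`. Since `f(z)` only depends on `|z|²` and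
`Re z`, clearing the denominator `‖x‖²` gives the formula, with `⟪x, y⟫ + ⟪y, x⟫ = 2 Re⟪x, y⟫`.
-/

open scoped InnerProductSpace

namespace Complex

theorem re_ofReal_mul_exp_I_mul (r θ : ℝ) : ((r : ℂ) * exp (I * θ)).re = r * Real.cos θ := by
  rw [re_ofReal_mul, mul_comm I, exp_ofReal_mul_I_re]

theorem norm_ofReal_mul_exp_I_mul (r θ : ℝ) : ‖(r : ℂ) * exp (I * θ)‖ = |r| := by
  rw [norm_mul, mul_comm I, norm_exp_ofReal_mul_I, mul_one, norm_real, Real.norm_eq_abs]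

end Complex

open Complex

theorem Real.cos_arccos_div_mul {c p : ℝ} (h : |c| ≤ p) :
    Real.cos (Real.arccos (c / p)) * p = c := by
  rcases (abs_nonneg c).trans h |>.eq_or_lt with hp | hp
  · subst hp
    simp [abs_nonpos_iff.mp h]
  · have h1 : |c / p| ≤ 1 := by rwa [abs_div, abs_of_pos hp, div_le_one hp]
    rw [abs_le] at h1
    rw [Real.cos_arccos h1.1 h1.2, div_mul_cancel₀ c hp.ne']

theorem abs_re_inner_le_norm {𝕜 E : Type*} [RCLike 𝕜] [NormedAddCommGroup E]
    [InnerProductSpace 𝕜 E] (x y : E) : |RCLike.re ⟪x, y⟫_𝕜| ≤ ‖x‖ * ‖y‖ :=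
  (RCLike.abs_re_le_norm _).trans (norm_inner_le_norm x y)

theorem inner_add_inner_swap {E : Type*} [NormedAddCommGroup E] [InnerProductSpace ℂ E]
    (x y : E) : ⟪x, y⟫_ℂ + ⟪y, x⟫_ℂ = ((2 * (⟪x, y⟫_ℂ).re : ℝ) : ℂ) := by
  rw [← inner_conj_symm y x, add_conj]

theorem bkMap_eq_of_norm_sq_of_re {z : ℂ} {a b c : ℝ} (ha : a ≠ 0)
    (hnorm : ‖z‖ ^ 2 = b ^ 2 / a ^ 2) (hre : z.re = c / a ^ 2) :
    bkMap z = (((b ^ 2 - a ^ 2 : ℝ) : ℂ) - I * ((2 * c : ℝ) : ℂ)) / ((a ^ 2 + b ^ 2 : ℝ) : ℂ) := by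
  have ha' : (a : ℂ) ≠ 0 := ofReal_ne_zero.mpr ha
  have hab : (a : ℂ) ^ 2 + (b : ℂ) ^ 2 ≠ 0 := by
    exact_mod_cast (by positivity : a ^ 2 + b ^ 2 ≠ 0)
  rw [bkMap, ← ofReal_pow, hnorm, hre]
  push_cast
  field_simp
  ring

theorem bkMap_polar_point_general {H : Type*} [NormedAddCommGroup H] [InnerProductSpace ℂ H]
    (x y : H) (hx : x ≠ 0) :
    bkMap (((‖y‖ / ‖x‖ : ℝ) : ℂ) *
        Complex.exp (Complex.I * (Real.arccos ((⟪x, y⟫_ℂ).re / (‖y‖ * ‖x‖)) : ℝ))) =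
      (((‖y‖ ^ 2 - ‖x‖ ^ 2 : ℝ) : ℂ) - Complex.I * (⟪x, y⟫_ℂ + ⟪y, x⟫_ℂ)) /
        ((‖x‖ ^ 2 + ‖y‖ ^ 2 : ℝ) : ℂ) := by
  have hcos := Real.cos_arccos_div_mul
    ((abs_re_inner_le_norm (𝕜 := ℂ) x y).trans_eq (mul_comm ‖x‖ ‖y‖))
  rw [inner_add_inner_swap]
  refine bkMap_eq_of_norm_sq_of_re (norm_ne_zero_iff.mpr hx) ?_ ?_
  · rw [norm_ofReal_mul_exp_I_mul, sq_abs, div_pow]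
  · rw [re_ofReal_mul_exp_I_mul]
    field_simp
    linear_combination hcos

theorem bkMap_polar_point {H : Type*} [NormedAddCommGroup H] [InnerProductSpace ℂ H]
    (x y : H) (hx : x ≠ 0) (hy : y ≠ 0) :
    bkMap (((‖y‖ / ‖x‖ : ℝ) : ℂ) *
        Complex.exp (Complex.I * (Real.arccos ((⟪x, y⟫_ℂ).re / (‖y‖ * ‖x‖)) : ℝ))) =
      (((‖y‖ ^ 2 - ‖x‖ ^ 2 : ℝ) : ℂ) - Complex.I * (⟪x, y⟫_ℂ + ⟪y, x⟫_ℂ)) /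
        ((‖x‖ ^ 2 + ‖y‖ ^ 2 : ℝ) : ℂ) :=
  bkMap_polar_point_general x y hx
end

section
/- Let A be an n×n complex matrix and let W(A) = { ⟨Av, v⟩ : ‖v‖ = 1 } be its numerical range. Then W(A) is a convex subset of ℂ (Toeplitz–Hausdorff theorem). -/
/-!
After an affine change of the operator it suffices to show that if `0` and `1` are values of
`x ↦ ⟪x, T x⟫` at unit vectors `u` and `v`, then so is every `t ∈ [0, 1]`. Rotating the phase
of `u` makes the cross term `⟪u, T v⟫ + ⟪v, T u⟫` real, so `⟪x, T x⟫` is real on the whole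
segment `x(s) = (1 - s) u + s v`, and the intermediate value theorem applied to
`⟪x(s), T x(s)⟫ - t ‖x(s)‖²` yields an `s` at which the normalised `x(s)` has value `t`. The
segment avoids `0`, since a multiple of `u` has value `0`, not `1`.
-/

open scoped InnerProductSpace ComplexConjugate
open Set

namespace LinearMap

variable {E : Type*} [NormedAddCommGroup E] [InnerProductSpace ℂ E]

def numericalRange (T : E →ₗ[ℂ] E) : Set ℂ :=
  {w | ∃ x : E, ‖x‖ = 1 ∧ w = ⟪x, T x⟫_ℂ}

variable (T : E →ₗ[ℂ] E)

theorem numericalRange_smul_add_smul_id (c e : ℂ) :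
    numericalRange (c • T + e • LinearMap.id) = (fun w ↦ c * w + e) '' numericalRange T := by
  have hval : ∀ x : E, ‖x‖ = 1 →
      ⟪x, (c • T + e • LinearMap.id : E →ₗ[ℂ] E) x⟫_ℂ = c * ⟪x, T x⟫_ℂ + e := by
    intro x hx
    simp [inner_self_eq_norm_sq_to_K, hx]
  ext w
  constructor
  · rintro ⟨x, hx, rfl⟩
    exact ⟨_, ⟨x, hx, rfl⟩, (hval x hx).symm⟩
  · rintro ⟨_, ⟨x, hx, rfl⟩, rfl⟩
    exact ⟨x, hx, (hval x hx).symm⟩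

theorem mem_numericalRange_of_inner_eq {x : E} (hx : x ≠ 0) {w : ℂ}
    (h : ⟪x, T x⟫_ℂ = w * (‖x‖ : ℂ) ^ 2) : w ∈ numericalRange T := by
  refine ⟨(‖x‖⁻¹ : ℂ) • x, norm_smul_inv_norm hx, ?_⟩
  have : (‖x‖ : ℂ) ≠ 0 := by exact_mod_cast norm_ne_zero_iff.mpr hx
  rw [map_smul, inner_smul_left, inner_smul_right, h, map_inv₀, Complex.conj_ofReal]
  field_simp

theorem inner_apply_real_smul_add_real_smul (x y : E) (a b : ℝ) :
    ⟪(a : ℂ) • x + (b : ℂ) • y, T ((a : ℂ) • x + (b : ℂ) • y)⟫_ℂ =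
      (a ^ 2 : ℝ) * ⟪x, T x⟫_ℂ + (a * b : ℝ) * (⟪x, T y⟫_ℂ + ⟪y, T x⟫_ℂ) +
        (b ^ 2 : ℝ) * ⟪y, T y⟫_ℂ := by
  simp only [map_add, map_smul, inner_add_left, inner_add_right, inner_smul_left,
    inner_smul_right, Complex.conj_ofReal]
  push_cast
  ring

theorem exists_norm_eq_one_im_inner_add_eq_zero (u v : E) :
    ∃ c : ℂ, ‖c‖ = 1 ∧ (⟪c • u, T v⟫_ℂ + ⟪v, T (c • u)⟫_ℂ).im = 0 := by
  obtain ⟨c, hc, hcz⟩ := Complex.exists_norm_eq_mul_self (⟪v, T u⟫_ℂ - conj ⟪u, T v⟫_ℂ)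
  refine ⟨c, hc, ?_⟩
  -- `conj c * ⟪u, T v⟫ + c * ⟪v, T u⟫` has the imaginary part of `c * (⟪v, T u⟫ - conj ⟪u, T v⟫)`
  have : (c * (⟪v, T u⟫_ℂ - conj ⟪u, T v⟫_ℂ)).im = 0 := by rw [← hcz]; simp
  rw [map_smul, inner_smul_left, inner_smul_right]
  simp only [Complex.mul_im, Complex.sub_im, Complex.sub_re, Complex.conj_re, Complex.conj_im,
    Complex.add_im] at this ⊢
  linarith

theorem ofReal_smul_add_ofReal_smul_ne_zero {u v : E} (hu : u ≠ 0) (hTu : ⟪u, T u⟫_ℂ = 0)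
    (hTv : ⟪v, T v⟫_ℂ ≠ 0) (s : ℝ) : ((1 - s : ℝ) : ℂ) • u + (s : ℂ) • v ≠ 0 := by
  intro h
  rcases eq_or_ne s 0 with rfl | hs
  · exact hu (by simpa using h)
  have hvu : v = (-(1 - s) / s : ℂ) • u := by
    have hs' : (s : ℂ) ≠ 0 := by exact_mod_cast hs
    linear_combination (norm := skip) (s : ℂ)⁻¹ • h
    match_scalars <;> field_simp <;> ring
  exact hTv (by simp [hvu, hTu])

theorem ofReal_mem_numericalRange_of_zero_mem_of_one_mem (h0 : 0 ∈ numericalRange T)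
    (h1 : 1 ∈ numericalRange T) {t : ℝ} (ht : t ∈ Icc 0 1) : (t : ℂ) ∈ numericalRange T := by
  obtain ⟨u, hu, hTu⟩ := h0
  obtain ⟨v, hv, hTv⟩ := h1
  obtain ⟨c, hc, hcross⟩ := exists_norm_eq_one_im_inner_add_eq_zero T u v
  set u' := c • u
  have hu' : ‖u'‖ = 1 := by simp [u', norm_smul, hc, hu]
  have hTu' : ⟪u', T u'⟫_ℂ = 0 := by simp [u', ← hTu]
  set r := (⟪u', T v⟫_ℂ + ⟪v, T u'⟫_ℂ).re
  have hr : ⟪u', T v⟫_ℂ + ⟪v, T u'⟫_ℂ = r := Complex.ext rfl (by simpa using hcross)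
  let x : ℝ → E := fun s ↦ ((1 - s : ℝ) : ℂ) • u' + (s : ℂ) • v
  have hx : ∀ s, ⟪x s, T (x s)⟫_ℂ = ((1 - s) * s * r + s ^ 2 : ℝ) := by
    intro s
    rw [inner_apply_real_smul_add_real_smul, hTu', ← hTv, hr]
    push_cast
    ring
  let g : ℝ → ℝ := fun s ↦ (1 - s) * s * r + s ^ 2 - t * ‖x s‖ ^ 2
  have hg : ContinuousOn g (Icc 0 1) := by fun_prop
  have hg0 : g 0 = -t := by simp [g, x, hu']
  have hg1 : g 1 = 1 - t := by simp [g, x, hv]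
  obtain ⟨s, -, hs⟩ : (0 : ℝ) ∈ g '' Icc 0 1 :=
    intermediate_value_Icc zero_le_one hg (by rw [hg0, hg1]; constructor <;> linarith [ht.1, ht.2])
  have hxs : x s ≠ 0 := ofReal_smul_add_ofReal_smul_ne_zero T
    (ne_zero_of_norm_ne_zero (hu'.symm ▸ one_ne_zero)) hTu' (hTv ▸ one_ne_zero) s
  refine mem_numericalRange_of_inner_eq T hxs ?_
  rw [hx]
  exact_mod_cast (by linarith [hs] : (1 - s) * s * r + s ^ 2 = t * ‖x s‖ ^ 2)

theorem convex_numericalRange : Convex ℝ (numericalRange T) := by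
  refine convex_iff_segment_subset.2 fun w₀ hw₀ w₁ hw₁ ↦ ?_
  rw [segment_eq_image_lineMap]
  rintro _ ⟨t, ht, rfl⟩
  rcases eq_or_ne w₀ w₁ with rfl | hne
  · rwa [AffineMap.lineMap_same_apply]
  have hd : w₁ - w₀ ≠ 0 := sub_ne_zero.2 hne.symm
  -- `w ↦ (w - w₀) / (w₁ - w₀)` moves `w₀, w₁` to `0, 1`
  have hW := numericalRange_smul_add_smul_id T (w₁ - w₀)⁻¹ (-(w₁ - w₀)⁻¹ * w₀)
  have h0 : 0 ∈ numericalRange ((w₁ - w₀)⁻¹ • T + (-(w₁ - w₀)⁻¹ * w₀) • LinearMap.id) :=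
    hW ▸ ⟨w₀, hw₀, by ring⟩
  have h1 : 1 ∈ numericalRange ((w₁ - w₀)⁻¹ • T + (-(w₁ - w₀)⁻¹ * w₀) • LinearMap.id) :=
    hW ▸ ⟨w₁, hw₁, by field_simp; ring⟩
  obtain ⟨w, hw, hwt⟩ := hW ▸ ofReal_mem_numericalRange_of_zero_mem_of_one_mem _ h0 h1 ht
  convert hw using 1
  rw [AffineMap.lineMap_apply_module', Complex.real_smul]
  field_simp at hwt
  linear_combination -hwt

end LinearMap

/-- Toeplitz–Hausdorff theorem: the numerical range of a complex matrix is convex. -/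
theorem numerical_range_convex {n : ℕ} (A : Matrix (Fin n) (Fin n) ℂ) :
    Convex ℝ {w : ℂ | ∃ v : EuclideanSpace ℂ (Fin n), ‖v‖ = 1 ∧
      w = ⟪v, Matrix.toEuclideanLin A v⟫_ℂ} :=
  (Matrix.toEuclideanLin A).convex_numericalRange
end

section
/- Let A and B be n×n real symmetric matrices with n ≠ 2. Then the set { xᵀAx + i·xᵀBx : x ∈ ℝⁿ, xᵀx = 1 } is convex. -/
/-!
Write `F x = xᵀAx + i·xᵀBx`. Given unit vectors `x` and `y`, choose the real combination `C` of
`A` and `B` for which `zᵀCz - xᵀCx` is a multiple of the signed distance from `F z` to the line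
through `F x` and `F y`. In an eigenbasis of `C`, the unit vectors with `zᵀCz = xᵀCx` are the
preimage, under coordinatewise squaring, of an affine subspace `K`. Two such points whose
coordinates have the same signs are joined by the path `t ↦ sign · √((1 - t) z² + t w²)`, and the
sign of coordinate `i` can be flipped by passing through a point of the level set with `i`-th
coordinate zero. When `n ≠ 2`, all coordinates but at most one admit such a point, and adjusting
the sign of `y` takes care of the exceptional one, so `x` is joined to `y` or `-y` inside the
level set. The image under `F` of this path is a connected subset of the line containing `F x`
and `F y`, hence contains the segment between them.
-/

open Matrix Complex ComplexConjugate

variable {ι : Type*}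

/-- For convex `K`, this lets a path in `(· ^ 2) ⁻¹' K` change the sign of coordinate `i`. -/
def CanVanishAt (K : Set (ι → ℝ)) (i : ι) : Prop :=
  ∃ u : ι → ℝ, u ^ 2 ∈ K ∧ u i = 0

theorem Finset.piecewise_neg_sq [DecidableEq ι] (D : Finset ι) (z : ι → ℝ) :
    D.piecewise (-z) z ^ 2 = z ^ 2 := by
  ext j
  by_cases hj : j ∈ D <;> simp [hj]

variable {K : Set (ι → ℝ)} {z w : ι → ℝ}

theorem joinedIn_preimage_sq_of_mul_nonneg (hK : Convex ℝ K) (hz : z ^ 2 ∈ K) (hw : w ^ 2 ∈ K)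
    (h : ∀ i, 0 ≤ z i * w i) : JoinedIn ((· ^ 2) ⁻¹' K) z w := by
  set σ : ι → ℝ := fun i => if 0 ≤ z i + w i then 1 else -1
  have hσ : ∀ i, σ i ^ 2 = 1 ∧ σ i * |z i| = z i ∧ σ i * |w i| = w i := by
    intro i
    have := h i
    by_cases hi : 0 ≤ z i + w i
    · simp only [σ, if_pos hi, one_mul]
      refine ⟨by norm_num, abs_of_nonneg ?_, abs_of_nonneg ?_⟩ <;> nlinarith
    · simp only [σ, if_neg hi, neg_one_mul, neg_sq, one_pow]
      refine ⟨trivial, neg_eq_iff_eq_neg.2 (abs_of_nonpos ?_),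
        neg_eq_iff_eq_neg.2 (abs_of_nonpos ?_)⟩ <;> nlinarith
  set γ : ℝ → ι → ℝ := fun t i => σ i * √((1 - t) * z i ^ 2 + t * w i ^ 2)
  have hγ : ∀ t ∈ unitInterval, γ t ^ 2 = (1 - t) • z ^ 2 + t • w ^ 2 := by
    rintro t ⟨ht₀, ht₁⟩
    ext i
    have : 0 ≤ (1 - t) * z i ^ 2 + t * w i ^ 2 := by
      have := sq_nonneg (z i); have := sq_nonneg (w i); nlinarith
    simp [γ, mul_pow, Real.sq_sqrt this, (hσ i).1]
  refine JoinedIn.ofLine (f := γ) (continuous_pi fun i => by fun_prop).continuousOn ?_ ?_ ?_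
  · ext i; simp [γ, Real.sqrt_sq_eq_abs, (hσ i).2.1]
  · ext i; simp [γ, Real.sqrt_sq_eq_abs, (hσ i).2.2]
  · rintro _ ⟨t, ht, rfl⟩
    rw [Set.mem_preimage, hγ t ht]
    exact hK hz hw (sub_nonneg.2 ht.2) ht.1 (sub_add_cancel 1 t)

theorem joinedIn_preimage_sq_of_forall_ne_eq (hK : Convex ℝ K) (hz : z ^ 2 ∈ K)
    (hw : w ^ 2 ∈ K) {i : ι} (hzw : ∀ j ≠ i, z j = w j) (hi : CanVanishAt K i) :
    JoinedIn ((· ^ 2) ⁻¹' K) z w := by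
  classical
  obtain ⟨u, hu, hui⟩ := hi
  -- `u` with the signs of `z` is sign-compatible with both `z` and `w`
  set v : ι → ℝ := fun j => if 0 ≤ z j then |u j| else -|u j|
  have hv : v ^ 2 ∈ K := by
    convert hu using 1
    ext j; by_cases hj : 0 ≤ z j <;> simp [v, hj]
  have hzv : ∀ j, 0 ≤ z j * v j := fun j => by
    by_cases hj : 0 ≤ z j
    · simp only [v, if_pos hj]; positivity
    · simp only [v, if_neg hj, mul_neg]; nlinarith [abs_nonneg (u j)]
  have hwv : ∀ j, 0 ≤ w j * v j := fun j => by
    rcases eq_or_ne j i with rfl | hj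
    · simp [v, hui]
    · rw [← hzw j hj]; exact hzv j
  exact (joinedIn_preimage_sq_of_mul_nonneg hK hz hv hzv).trans
    (joinedIn_preimage_sq_of_mul_nonneg hK hw hv hwv).symm

theorem joinedIn_preimage_sq_piecewise_neg [DecidableEq ι] (hK : Convex ℝ K) (hz : z ^ 2 ∈ K)
    (D : Finset ι) (hD : ∀ i ∈ D, CanVanishAt K i) :
    JoinedIn ((· ^ 2) ⁻¹' K) z (D.piecewise (-z) z) := by
  induction D using Finset.induction_on with
  | empty => simpa using JoinedIn.refl (F := (· ^ 2) ⁻¹' K) hz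
  | insert a D _ ih =>
    refine (ih fun i hi => hD i (Finset.mem_insert_of_mem hi)).trans
      (joinedIn_preimage_sq_of_forall_ne_eq hK ((D.piecewise_neg_sq z).symm ▸ hz)
        ((Finset.piecewise_neg_sq _ z).symm ▸ hz) (fun j hj => ?_) (hD a (D.mem_insert_self a)))
    rw [Finset.piecewise_insert, Function.update_of_ne hj]

variable [Fintype ι]

theorem joinedIn_preimage_sq_of_forall_mul_neg (hK : Convex ℝ K) (hz : z ^ 2 ∈ K)
    (hw : w ^ 2 ∈ K) (h : ∀ i, z i * w i < 0 → CanVanishAt K i) :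
    JoinedIn ((· ^ 2) ⁻¹' K) z w := by
  classical
  set D := Finset.univ.filter fun i => z i * w i < 0
  refine (joinedIn_preimage_sq_piecewise_neg hK hz D fun i hi => h i (Finset.mem_filter.1 hi).2
    ).trans (joinedIn_preimage_sq_of_mul_nonneg hK ?_ hw fun i => ?_)
  · rwa [D.piecewise_neg_sq]
  · by_cases hi : z i * w i < 0
    · simp only [D, Finset.mem_filter, Finset.mem_univ, true_and, hi, Finset.piecewise_eq_of_mem,
        Pi.neg_apply, neg_mul]
      linarith
    · simpa [D, hi] using not_lt.1 hi

theorem Fintype.exists_ne_ne_of_card_ne_two (h : Fintype.card ι ≠ 2) {i j : ι} (hij : i ≠ j) :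
    ∃ k, k ≠ i ∧ k ≠ j := by
  classical
  by_contra! hk
  refine h (Finset.card_eq_two.2 ⟨i, j, hij, ?_⟩)
  ext k
  simpa [or_iff_not_imp_left] using hk k

def weightedMeanLevel (μ : ι → ℝ) (c : ℝ) : Set (ι → ℝ) :=
  {s | ∑ i, s i = 1 ∧ ∑ i, μ i * s i = c}

variable {μ : ι → ℝ} {c : ℝ}

theorem convex_weightedMeanLevel : Convex ℝ (weightedMeanLevel μ c) := by
  rintro s ⟨hs₁, hsc⟩ t ⟨ht₁, htc⟩ a b - - hab
  refine ⟨?_, ?_⟩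
  · simp only [Pi.add_apply, Pi.smul_apply, smul_eq_mul, Finset.sum_add_distrib,
      ← Finset.mul_sum, hs₁, ht₁]
    linear_combination hab
  · simp only [Pi.add_apply, Pi.smul_apply, smul_eq_mul, mul_add, Finset.sum_add_distrib,
      mul_left_comm (μ _), ← Finset.mul_sum, hsc, htc]
    linear_combination c * hab

theorem exists_le_and_exists_ge_of_mem_weightedMeanLevel {s : ι → ℝ} (hs₀ : 0 ≤ s)
    (hs : s ∈ weightedMeanLevel μ c) : (∃ a, μ a ≤ c) ∧ ∃ b, c ≤ μ b := by
  have hne : (Finset.univ : Finset ι).Nonempty :=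
    Finset.nonempty_of_sum_ne_zero (hs.1 ▸ one_ne_zero)
  obtain ⟨a, -, ha⟩ := Finset.exists_min_image Finset.univ μ hne
  obtain ⟨b, -, hb⟩ := Finset.exists_max_image Finset.univ μ hne
  refine ⟨⟨a, ?_⟩, ⟨b, ?_⟩⟩ <;> rw [← hs.2]
  · calc μ a = ∑ i, μ a * s i := by rw [← Finset.mul_sum, hs.1, mul_one]
      _ ≤ ∑ i, μ i * s i := Finset.sum_le_sum fun i _ =>
        mul_le_mul_of_nonneg_right (ha i (Finset.mem_univ i)) (hs₀ i)
  · calc ∑ i, μ i * s i ≤ ∑ i, μ b * s i := Finset.sum_le_sum fun i _ =>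
        mul_le_mul_of_nonneg_right (hb i (Finset.mem_univ i)) (hs₀ i)
      _ = μ b := by rw [← Finset.mul_sum, hs.1, mul_one]

theorem canVanishAt_weightedMeanLevel [DecidableEq ι] {a b l : ι} (ha : μ a ≤ c)
    (hb : c ≤ μ b) (hal : a ≠ l) (hbl : b ≠ l) : CanVanishAt (weightedMeanLevel μ c) l := by
  obtain ⟨θa, θb, hθa, hθb, hθ, hc⟩ : c ∈ segment ℝ (μ a) (μ b) := by
    rw [segment_eq_Icc (ha.trans hb)]; exact ⟨ha, hb⟩
  set s : ι → ℝ := Pi.single a θa + Pi.single b θb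
  have hs₀ : 0 ≤ s := add_nonneg (Pi.single_nonneg.2 hθa) (Pi.single_nonneg.2 hθb)
  refine ⟨fun i => √(s i), ?_, ?_⟩
  · have : (fun i => √(s i)) ^ 2 = s := by ext i; simp [Real.sq_sqrt (hs₀ i)]
    rw [this]
    refine ⟨?_, ?_⟩
    · simp [s, Finset.sum_add_distrib, hθ]
    · simp [s, Finset.sum_add_distrib, Pi.single_apply, mul_add, ← hc, mul_comm]
  · simp [s, hal.symm, hbl.symm]

theorem canVanishAt_weightedMeanLevel_of_not [DecidableEq ι] (hι : Fintype.card ι ≠ 2)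
    {x : ι → ℝ} (hx : x ^ 2 ∈ weightedMeanLevel μ c) {i j : ι}
    (hi : ¬CanVanishAt (weightedMeanLevel μ c) i) (hij : i ≠ j) :
    CanVanishAt (weightedMeanLevel μ c) j := by
  by_contra hj
  obtain ⟨k, hki, hkj⟩ := Fintype.exists_ne_ne_of_card_ne_two hι hij
  obtain ⟨⟨a, ha⟩, ⟨b, hb⟩⟩ :=
    exists_le_and_exists_ge_of_mem_weightedMeanLevel (fun l => sq_nonneg (x l)) hx
  rcases le_total (μ k) c with hk | hk
  · have hbi : b = i := by_contra fun h => hi (canVanishAt_weightedMeanLevel hk hb hki h)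
    have hbj : b = j := by_contra fun h => hj (canVanishAt_weightedMeanLevel hk hb hkj h)
    exact hij (hbi.symm.trans hbj)
  · have hai : a = i := by_contra fun h => hi (canVanishAt_weightedMeanLevel ha hk h hki)
    have haj : a = j := by_contra fun h => hj (canVanishAt_weightedMeanLevel ha hk h hkj)
    exact hij (hai.symm.trans haj)

theorem joinedIn_or_joinedIn_neg_of_weightedMeanLevel [DecidableEq ι] (hι : Fintype.card ι ≠ 2)
    {x y : ι → ℝ} (hx : x ^ 2 ∈ weightedMeanLevel μ c)
    (hy : y ^ 2 ∈ weightedMeanLevel μ c) :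
    JoinedIn ((· ^ 2) ⁻¹' weightedMeanLevel μ c) x y ∨
      JoinedIn ((· ^ 2) ⁻¹' weightedMeanLevel μ c) x (-y) := by
  have hK := convex_weightedMeanLevel (μ := μ) (c := c)
  by_cases hall : ∀ i, CanVanishAt (weightedMeanLevel μ c) i
  · exact .inl (joinedIn_preimage_sq_of_forall_mul_neg hK hx hy fun i _ => hall i)
  obtain ⟨i, hi⟩ := not_forall.1 hall
  have hvanish : ∀ j ≠ i, CanVanishAt (weightedMeanLevel μ c) j :=
    fun j hj => canVanishAt_weightedMeanLevel_of_not hι hx hi hj.symm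
  rcases le_total 0 (x i * y i) with hxy | hxy
  · refine .inl (joinedIn_preimage_sq_of_forall_mul_neg hK hx hy fun j hj => hvanish j ?_)
    rintro rfl; linarith
  · refine .inr (joinedIn_preimage_sq_of_forall_mul_neg hK hx (by rwa [neg_sq]) fun j hj =>
      hvanish j ?_)
    rintro rfl; rw [Pi.neg_apply, mul_neg] at hj; linarith

def sphereLevelSet (C : Matrix ι ι ℝ) (c : ℝ) : Set (ι → ℝ) :=
  {z | z ⬝ᵥ z = 1 ∧ z ⬝ᵥ C *ᵥ z = c}

theorem sphereLevelSet_diagonal [DecidableEq ι] (μ : ι → ℝ) :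
    sphereLevelSet (diagonal μ) c = (· ^ 2) ⁻¹' weightedMeanLevel μ c := by
  ext z
  simp [sphereLevelSet, weightedMeanLevel, dotProduct, mulVec_diagonal, sq, mul_left_comm]

theorem mulVec_mem_sphereLevelSet_iff [DecidableEq ι] {U C : Matrix ι ι ℝ}
    (hU : U ∈ unitary (Matrix ι ι ℝ)) {w : ι → ℝ} :
    U *ᵥ w ∈ sphereLevelSet C c ↔ w ∈ sphereLevelSet (star U * C * U) c := by
  have hUt : Uᵀ * U = 1 := Unitary.star_mul_self_of_mem hU
  have adjoint : ∀ v v' : ι → ℝ, (U *ᵥ v) ⬝ᵥ v' = v ⬝ᵥ (Uᵀ *ᵥ v') := fun _ _ => by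
    rw [dotProduct_comm, dotProduct_mulVec, dotProduct_comm, mulVec_transpose]
  simp only [sphereLevelSet, Set.mem_ofPred_eq, adjoint, mulVec_mulVec, hUt, one_mulVec,
    star_eq_conjTranspose, conjTranspose_eq_transpose_of_trivial, Matrix.mul_assoc]

theorem Matrix.IsHermitian.joinedIn_or_joinedIn_neg [DecidableEq ι] (hι : Fintype.card ι ≠ 2)
    {C : Matrix ι ι ℝ} (hC : C.IsHermitian) {x y : ι → ℝ} (hx : x ∈ sphereLevelSet C c)
    (hy : y ∈ sphereLevelSet C c) :
    JoinedIn (sphereLevelSet C c) x y ∨ JoinedIn (sphereLevelSet C c) x (-y) := by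
  set U := (hC.eigenvectorUnitary : Matrix ι ι ℝ)
  have hU := hC.eigenvectorUnitary.2
  have hdiag : star U * C * U = diagonal hC.eigenvalues := by
    simpa [Unitary.conjStarAlgAut_apply] using hC.conjStarAlgAut_star_eigenvectorUnitary
  have hUU : ∀ z, U *ᵥ (star U *ᵥ z) = z := fun z => by
    rw [mulVec_mulVec, Unitary.mul_star_self_of_mem hU, one_mulVec]
  have hmem : ∀ w, U *ᵥ w ∈ sphereLevelSet C c ↔ w ^ 2 ∈ weightedMeanLevel hC.eigenvalues c :=
    fun w => by rw [mulVec_mem_sphereLevelSet_iff hU, hdiag, sphereLevelSet_diagonal]; rfl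
  have transfer : ∀ {w w'}, JoinedIn ((· ^ 2) ⁻¹' weightedMeanLevel hC.eigenvalues c) w w' →
      JoinedIn (sphereLevelSet C c) (U *ᵥ w) (U *ᵥ w') := fun h =>
    (h.map (f := (U *ᵥ ·)) (by fun_prop)).mono <|
      Set.image_subset_iff.2 fun w hw => (hmem w).2 hw
  have hx' := (hmem _).1 ((hUU x).symm ▸ hx)
  have hy' := (hmem _).1 ((hUU y).symm ▸ hy)
  simpa only [mulVec_neg, hUU] using
    (joinedIn_or_joinedIn_neg_of_weightedMeanLevel hι hx' hy').imp transfer transfer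

theorem Complex.segment_subset_of_isPreconnected {Q : Set ℂ} (hQ : IsPreconnected Q) {p q : ℂ}
    (hp : p ∈ Q) (hq : q ∈ Q) (hline : ∀ w ∈ Q, (conj (q - p) * (w - p)).im = 0) :
    segment ℝ p q ⊆ Q := by
  rcases eq_or_ne q p with rfl | hpq
  · simpa [segment_same] using hp
  rw [segment_eq_image']
  rintro _ ⟨t, ⟨ht₀, ht₁⟩, rfl⟩
  show p + t • (q - p) ∈ Q
  set φ : ℂ → ℝ := fun w => (conj (q - p) * (w - p)).re
  have hφ : ∀ s : ℝ, φ (p + s • (q - p)) = s * normSq (q - p) := fun s => by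
    show (conj (q - p) * (p + s • (q - p) - p)).re = _
    rw [add_sub_cancel_left, mul_smul_comm, ← normSq_eq_conj_mul_self, smul_re, ofReal_re,
      smul_eq_mul]
  have hφp : φ p = 0 := by simp [φ]
  have hφq : φ q = normSq (q - p) := by simpa using hφ 1
  obtain ⟨w, hw, hφw⟩ := hQ.intermediate_value hp hq (f := φ)
    (by fun_prop : Continuous φ).continuousOn
    (show φ (p + t • (q - p)) ∈ Set.Icc (φ p) (φ q) by
      rw [hφ, hφp, hφq]
      exact ⟨mul_nonneg ht₀ (normSq_nonneg _), mul_le_of_le_one_left (normSq_nonneg _) ht₁⟩)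
  suffices w = p + t • (q - p) by rw [← this]; exact hw
  have key : conj (q - p) * (w - p) = conj (q - p) * (t • (q - p)) := by
    apply Complex.ext
    · simpa [φ, hφ] using hφw
    · have h := hline w hw
      simp only [Complex.mul_im, conj_re, conj_im, sub_re, sub_im, real_smul, mul_re, mul_im,
        ofReal_re, ofReal_im] at h ⊢
      linear_combination h
  have := mul_left_cancel₀ ((map_ne_zero _).2 (sub_ne_zero.2 hpq)) key
  linear_combination this

theorem JoinedIn.segment_subset_image {X : Type*} [TopologicalSpace X] {S : Set X} {x y : X}
    (hxy : JoinedIn S x y) {F : X → ℂ} (hF : Continuous F)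
    (hline : ∀ z ∈ S, (conj (F y - F x) * (F z - F x)).im = 0) :
    segment ℝ (F x) (F y) ⊆ F '' S := by
  obtain ⟨γ, hγ⟩ := hxy
  refine (Complex.segment_subset_of_isPreconnected
    ((isConnected_range γ.continuous).isPreconnected.image F hF.continuousOn)
    ⟨x, ⟨0, γ.source⟩, rfl⟩ ⟨y, ⟨1, γ.target⟩, rfl⟩ ?_).trans
    (Set.image_mono (Set.range_subset_iff.2 hγ))
  rintro _ ⟨_, ⟨t, rfl⟩, rfl⟩
  exact hline _ (hγ t)

/-- Brickman's theorem: for `n ≠ 2`, the joint numerical range of two real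
symmetric matrices over the unit sphere of `ℝⁿ` is a convex subset of `ℂ`. -/
theorem brickman {n : ℕ} (hn : n ≠ 2) (A B : Matrix (Fin n) (Fin n) ℝ)
    (hA : Aᵀ = A) (hB : Bᵀ = B) :
    Convex ℝ {w : ℂ | ∃ x : Fin n → ℝ, x ⬝ᵥ x = 1 ∧
      w = ((x ⬝ᵥ A.mulVec x : ℝ) : ℂ) + ((x ⬝ᵥ B.mulVec x : ℝ) : ℂ) * Complex.I} := by
  rw [convex_iff_segment_subset]
  rintro _ ⟨x, hx, rfl⟩ _ ⟨y, hy, rfl⟩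
  set F : (Fin n → ℝ) → ℂ := fun z => ((z ⬝ᵥ A *ᵥ z : ℝ) : ℂ) + ((z ⬝ᵥ B *ᵥ z : ℝ) : ℂ) * I
  set d := F y - F x
  set C := d.re • B - d.im • A
  have hC : C.IsHermitian :=
    ((isHermitian_iff_isSymm.2 hB).smul (IsSelfAdjoint.all _)).sub
      ((isHermitian_iff_isSymm.2 hA).smul (IsSelfAdjoint.all _))
  have hCF : ∀ z, (conj d * (F z - F x)).im = z ⬝ᵥ C *ᵥ z - x ⬝ᵥ C *ᵥ x := fun z => by
    simp only [F, C, sub_mulVec, smul_mulVec, dotProduct_sub, dotProduct_smul, smul_eq_mul, mul_im,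
      conj_re, conj_im, sub_re, sub_im, add_re, add_im, ofReal_re, ofReal_im, mul_re, I_re, I_im]
    ring
  have hy' : y ∈ sphereLevelSet C (x ⬝ᵥ C *ᵥ x) := by
    refine ⟨hy, sub_eq_zero.1 ((hCF y).symm.trans ?_)⟩
    rw [mul_comm, mul_conj, ofReal_im]
  obtain ⟨y', hFy', hJ⟩ :
      ∃ y', F y' = F y ∧ JoinedIn (sphereLevelSet C (x ⬝ᵥ C *ᵥ x)) x y' :=
    (hC.joinedIn_or_joinedIn_neg (by simpa using hn) ⟨hx, rfl⟩ hy').elim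
      (⟨y, rfl, ·⟩) (⟨-y, by simp [F, mulVec_neg], ·⟩)
  show segment ℝ (F x) (F y) ⊆ _
  rw [← hFy']
  refine (hJ.segment_subset_image (by fun_prop) fun z hz => ?_).trans ?_
  · rw [hFy', hCF, hz.2, sub_self]
  · rintro _ ⟨z, hz, rfl⟩
    exact ⟨z, hz.1, rfl⟩
end

section
/- Let A and B be 2×2 real symmetric matrices. Then the set E = { xᵀAx + i·xᵀBx : x ∈ ℝ², xᵀx = 1 } equals the boundary of its convex hull; in particular E is the image of the unit circle under a real-quadratic map and is an ellipse, circle, line segment, or point. -/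
/-!
Writing a unit vector as `(cos θ, sin θ)`, the double-angle formulas turn both quadratic forms
into affine functions of `(cos 2θ, sin 2θ)`, so the joint range is the image of the unit circle
of `ℂ ≅ ℝ²` under a real affine map `f`. If `f` is bijective it is a homeomorphism, which carries
the circle, the frontier of the disc, to the frontier of the image of the disc, and that image is
the convex hull of the image of the circle. Otherwise `f` collapses a direction, so every point of
the image of the disc is also the image of a point on the circle: the image of the circle is then
a compact convex subset of a line or a point, with empty interior.
-/

open Matrix

/-- The joint numerical range of two `2 × 2` real symmetric matrices over the
unit circle of `ℝ²`. -/
noncomputable def jointRange (A B : Matrix (Fin 2) (Fin 2) ℝ) : Set ℂ :=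
  {w : ℂ | ∃ x : Fin 2 → ℝ, x ⬝ᵥ x = 1 ∧
    w = ((x ⬝ᵥ A.mulVec x : ℝ) : ℂ) + ((x ⬝ᵥ B.mulVec x : ℝ) : ℂ) * Complex.I}

open Metric Set

namespace AffineMap

variable {E : Type*} [NormedAddCommGroup E] [NormedSpace ℝ E]

theorem image_sphere_eq_image_closedBall_of_not_injective {F : Type*} [AddCommGroup F]
    [Module ℝ F] {f : E →ᵃ[ℝ] F} (hf : ¬ Function.Injective f) (x : E) (r : ℝ) :
    f '' sphere x r = f '' closedBall x r := by
  refine (image_mono sphere_subset_closedBall).antisymm ?_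
  rintro - ⟨y, hy, rfl⟩
  obtain ⟨k, hk, hk0⟩ : ∃ k ∈ LinearMap.ker f.linear, k ≠ 0 :=
    Submodule.exists_mem_ne_zero_of_ne_bot fun h ↦
      hf (f.linear_injective_iff.1 (LinearMap.ker_eq_bot.1 h))
  -- moving `y` along the kernel direction `k` leaves `f y` unchanged and eventually leaves the ball
  have hr : 0 ≤ r := dist_nonneg.trans (mem_closedBall.1 hy)
  set T := (r + ‖y - x‖) / ‖k‖
  have hT : r ≤ dist (T • k + y) x := by
    have hTk : ‖T • k‖ = r + ‖y - x‖ := by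
      rw [norm_smul, Real.norm_of_nonneg (by positivity),
        div_mul_cancel₀ _ (norm_ne_zero_iff.2 hk0)]
    have : ‖T • k‖ ≤ ‖T • k + y - x‖ + ‖y - x‖ :=
      calc ‖T • k‖ = ‖(T • k + y - x) - (y - x)‖ := by congr 1; abel
        _ ≤ _ := norm_sub_le _ _
    rw [dist_eq_norm]
    linarith
  obtain ⟨t, ht⟩ := intermediate_value_univ 0 T (f := fun t : ℝ ↦ dist (t • k + y) x)
    (by fun_prop) ⟨by simpa [mem_closedBall] using hy, hT⟩
  refine ⟨t • k + y, mem_sphere.2 ht, ?_⟩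
  rw [← vadd_eq_add, f.map_vadd, LinearMap.mem_ker.1 (Submodule.smul_mem _ t hk), zero_vadd]

theorem interior_image_eq_empty_of_not_surjective {V : Type*} [AddCommGroup V] [Module ℝ V]
    {f : V →ᵃ[ℝ] E} (hf : ¬ Function.Surjective f) (s : Set V) : interior (f '' s) = ∅ := by
  by_contra hne
  have hspan : affineSpan ℝ (range f) = ⊤ :=
    top_unique <| (affineSpan_eq_top_of_nonempty_interior
      ((nonempty_iff_ne_empty.2 hne).mono (interior_mono ((image_subset_range f s).trans
        (subset_convexHull ℝ _))))).ge
  refine hf fun y ↦ ?_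
  have : y ∈ AffineSubspace.map f ⊤ :=
    affineSpan_le.2 (by simp [AffineSubspace.coe_map]) (hspan ▸ AffineSubspace.mem_top ℝ E y)
  simpa using this

variable [FiniteDimensional ℝ E]

theorem injective_iff_surjective_of_finiteDimensional {f : E →ᵃ[ℝ] E} :
    Function.Injective f ↔ Function.Surjective f := by
  rw [← f.linear_injective_iff, ← f.linear_surjective_iff, LinearMap.injective_iff_surjective]

theorem image_sphere_eq_frontier_convexHull [Nontrivial E] (f : E →ᵃ[ℝ] E) (x : E) {r : ℝ}
    (hr : 0 < r) : f '' sphere x r = frontier (convexHull ℝ (f '' sphere x r)) := by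
  rw [← f.image_convexHull, convexHull_sphere_eq_closedBall x hr.le]
  by_cases hf : Function.Injective f
  · let e := (AffineEquiv.toContinuousAffineEquiv <| AffineEquiv.ofBijective
      ⟨hf, injective_iff_surjective_of_finiteDimensional.1 hf⟩).toHomeomorph
    change e '' _ = frontier (e '' _)
    rw [← e.image_frontier, frontier_closedBall x hr.ne']
  · rw [← image_sphere_eq_image_closedBall_of_not_injective hf,
      ((isCompact_sphere x r).image f.continuous_of_finiteDimensional).isClosed.frontier_eq,
      interior_image_eq_empty_of_not_surjective
        (mt injective_iff_surjective_of_finiteDimensional.2 hf), sdiff_empty]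

end AffineMap

noncomputable def reImAffineMap (c₀ c₁ c₂ : ℂ) : ℂ →ᵃ[ℝ] ℂ :=
  (Complex.reLm.smulRight c₁ + Complex.imLm.smulRight c₂).toAffineMap + AffineMap.const ℝ ℂ c₀

theorem reImAffineMap_exp_mul_I (c₀ c₁ c₂ : ℂ) (θ : ℝ) :
    reImAffineMap c₀ c₁ c₂ (Complex.exp (θ * Complex.I)) =
      c₀ + c₁ * (Real.cos θ : ℂ) + c₂ * (Real.sin θ : ℂ) := by
  simp only [reImAffineMap, AffineMap.coe_add, LinearMap.coe_toAffineMap, AffineMap.coe_const,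
    Pi.add_apply, LinearMap.add_apply, LinearMap.coe_smulRight, Complex.reLm_coe,
    Complex.imLm_coe, Complex.exp_ofReal_mul_I_re, Complex.exp_ofReal_mul_I_im,
    Complex.real_smul, Function.const_apply]
  ring

theorem setOf_cos_sin_two_mul_eq_image_sphere (c₀ c₁ c₂ : ℂ) :
    {w : ℂ | ∃ θ : ℝ, w = c₀ + c₁ * (Real.cos (2 * θ) : ℂ) + c₂ * (Real.sin (2 * θ) : ℂ)} =
      reImAffineMap c₀ c₁ c₂ '' sphere 0 1 := by
  ext w
  constructor
  · rintro ⟨θ, rfl⟩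
    refine ⟨Complex.exp ((2 * θ : ℝ) * Complex.I), ?_, reImAffineMap_exp_mul_I _ _ _ _⟩
    rw [mem_sphere_zero_iff_norm, Complex.norm_exp_ofReal_mul_I]
  · rintro ⟨z, hz, rfl⟩
    obtain ⟨t, rfl⟩ := (Complex.norm_eq_one_iff z).1 (mem_sphere_zero_iff_norm.1 hz)
    exact ⟨t / 2, by rw [mul_div_cancel₀ t two_ne_zero, reImAffineMap_exp_mul_I]⟩

theorem exists_eq_cos_sin_of_dotProduct_self_eq_one {x : Fin 2 → ℝ} (hx : x ⬝ᵥ x = 1) :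
    ∃ θ : ℝ, x = ![Real.cos θ, Real.sin θ] := by
  have hnorm : ‖(⟨x 0, x 1⟩ : ℂ)‖ = 1 := by
    have : x 0 * x 0 + x 1 * x 1 = 1 := by simpa [dotProduct, Fin.sum_univ_two] using hx
    rw [Complex.norm_def, Complex.normSq_mk, this, Real.sqrt_one]
  obtain ⟨θ, hθ⟩ := (Complex.norm_eq_one_iff _).1 hnorm
  refine ⟨θ, ?_⟩
  ext i
  fin_cases i
  · simpa using (congrArg Complex.re hθ).symm
  · simpa using (congrArg Complex.im hθ).symm

theorem dotProduct_self_cos_sin (θ : ℝ) :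
    ![Real.cos θ, Real.sin θ] ⬝ᵥ ![Real.cos θ, Real.sin θ] = 1 := by
  simp [dotProduct, Fin.sum_univ_two, ← sq, Real.cos_sq_add_sin_sq]

theorem dotProduct_mulVec_cos_sin {A : Matrix (Fin 2) (Fin 2) ℝ} (hA : Aᵀ = A) (θ : ℝ) :
    ![Real.cos θ, Real.sin θ] ⬝ᵥ A *ᵥ ![Real.cos θ, Real.sin θ] =
      (A 0 0 + A 1 1) / 2 + (A 0 0 - A 1 1) / 2 * Real.cos (2 * θ) +
        A 0 1 * Real.sin (2 * θ) := by
  have hA10 : A 1 0 = A 0 1 := by rw [← transpose_apply A 0 1, hA]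
  simp only [dotProduct, mulVec, Fin.sum_univ_two, Fin.isValue, cons_val_zero, cons_val_one,
    cons_val_fin_one, Real.cos_two_mul, Real.sin_two_mul, hA10]
  linear_combination A 1 1 * Real.sin_sq_add_cos_sq θ

theorem jointRange_eq_setOf_cos_sin_two_mul {A B : Matrix (Fin 2) (Fin 2) ℝ} (hA : Aᵀ = A)
    (hB : Bᵀ = B) :
    jointRange A B = {w : ℂ | ∃ θ : ℝ, w = ⟨(A 0 0 + A 1 1) / 2, (B 0 0 + B 1 1) / 2⟩ +
      ⟨(A 0 0 - A 1 1) / 2, (B 0 0 - B 1 1) / 2⟩ * (Real.cos (2 * θ) : ℂ) +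
      ⟨A 0 1, B 0 1⟩ * (Real.sin (2 * θ) : ℂ)} := by
  have hparam (θ : ℝ) :
      ((![Real.cos θ, Real.sin θ] ⬝ᵥ A *ᵥ ![Real.cos θ, Real.sin θ] : ℝ) : ℂ) +
        ((![Real.cos θ, Real.sin θ] ⬝ᵥ B *ᵥ ![Real.cos θ, Real.sin θ] : ℝ) : ℂ) * Complex.I =
        ⟨(A 0 0 + A 1 1) / 2, (B 0 0 + B 1 1) / 2⟩ +
        ⟨(A 0 0 - A 1 1) / 2, (B 0 0 - B 1 1) / 2⟩ * (Real.cos (2 * θ) : ℂ) +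
        ⟨A 0 1, B 0 1⟩ * (Real.sin (2 * θ) : ℂ) := by
    rw [dotProduct_mulVec_cos_sin hA, dotProduct_mulVec_cos_sin hB]
    simp only [Complex.ext_iff, Complex.add_re, Complex.add_im, Complex.mul_re, Complex.mul_im,
      Complex.ofReal_re, Complex.ofReal_im, Complex.I_re, Complex.I_im]
    constructor <;> ring
  ext w
  constructor
  · rintro ⟨x, hx, rfl⟩
    obtain ⟨θ, rfl⟩ := exists_eq_cos_sin_of_dotProduct_self_eq_one hx
    exact ⟨θ, hparam θ⟩
  · rintro ⟨θ, rfl⟩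
    exact ⟨_, dotProduct_self_cos_sin θ, (hparam θ).symm⟩

theorem jointRange_two_dim (A B : Matrix (Fin 2) (Fin 2) ℝ)
    (hA : Aᵀ = A) (hB : Bᵀ = B) :
    jointRange A B = frontier (convexHull ℝ (jointRange A B)) ∧
    ∃ c₀ c₁ c₂ : ℂ, jointRange A B =
      {w : ℂ | ∃ θ : ℝ, w = c₀ + c₁ * (Real.cos (2 * θ) : ℂ) + c₂ * (Real.sin (2 * θ) : ℂ)} := by
  have hparam := jointRange_eq_setOf_cos_sin_two_mul hA hB
  refine ⟨?_, _, _, _, hparam⟩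
  rw [hparam, setOf_cos_sin_two_mul_eq_image_sphere]
  exact (reImAffineMap _ _ _).image_sphere_eq_frontier_convexHull 0 one_pos
end

section
/- Let T be an n×n complex matrix, α ∈ ℝ, and γ ∈ ℂ. If |γ − α| > ‖T − αI‖ (operator norm), then γ ∉ SRG(T), where SRG(T) = { (‖Tx‖/‖x‖)·exp(±i·arccos(Re⟨Tx,x⟩/(‖Tx‖·‖x‖))) : ‖x‖ = 1, Tx ≠ 0 }. -/
open scoped InnerProductSpace
open Matrix

/-!
A point `w = r e^{±iθ}` of `SRG(T)` produced by a unit vector `x` has `r = ‖Tx‖` and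
`r cos θ = Re⟪x, Tx⟫`, so by the law of cosines
`|w - α|² = ‖Tx‖² - 2α Re⟪x, Tx⟫ + α² = ‖(T - αI)x‖² ≤ ‖T - αI‖²`.
-/

/-- The scaled relative graph (SRG) of an `n × n` complex matrix `T`:
the polar points of all input-output pairs `(x, Tx)` with `‖x‖ = 1` and `Tx ≠ 0`
(both sign choices of the angle). -/
noncomputable def srg {n : ℕ} (T : Matrix (Fin n) (Fin n) ℂ) : Set ℂ :=
  {w : ℂ | ∃ x : EuclideanSpace ℂ (Fin n), ‖x‖ = 1 ∧
    Matrix.toEuclideanLin T x ≠ 0 ∧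
    (w = ((‖Matrix.toEuclideanLin T x‖ / ‖x‖ : ℝ) : ℂ) *
        Complex.exp (Complex.I * (Real.arccos ((⟪x, Matrix.toEuclideanLin T x⟫_ℂ).re /
          (‖Matrix.toEuclideanLin T x‖ * ‖x‖)) : ℝ)) ∨
     w = ((‖Matrix.toEuclideanLin T x‖ / ‖x‖ : ℝ) : ℂ) *
        Complex.exp (-(Complex.I * (Real.arccos ((⟪x, Matrix.toEuclideanLin T x⟫_ℂ).re /
          (‖Matrix.toEuclideanLin T x‖ * ‖x‖)) : ℝ))))}

lemma Complex.norm_ofReal_mul_exp_sub_ofReal_sq (r θ a : ℝ) :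
    ‖(r : ℂ) * exp (I * θ) - a‖ ^ 2 = r ^ 2 - 2 * a * r * Real.cos θ + a ^ 2 := by
  rw [mul_comm I, exp_mul_I, Complex.sq_norm, normSq_apply]
  simp only [sub_re, sub_im, mul_re, mul_im, add_re, add_im, ofReal_re, ofReal_im,
    cos_ofReal_re, cos_ofReal_im, sin_ofReal_re, sin_ofReal_im, I_re, I_im]
  nlinarith [Real.sin_sq_add_cos_sq θ]

section

variable {E : Type*} [NormedAddCommGroup E] [InnerProductSpace ℂ E]

lemma norm_sub_ofReal_smul_sq (x y : E) (a : ℝ) :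
    ‖y - (a : ℂ) • x‖ ^ 2 = ‖y‖ ^ 2 - 2 * a * (⟪x, y⟫_ℂ).re + a ^ 2 * ‖x‖ ^ 2 := by
  rw [norm_sub_sq (𝕜 := ℂ), inner_smul_right, RCLike.re_to_complex, Complex.re_ofReal_mul,
    ← RCLike.re_to_complex, inner_re_symm, RCLike.re_to_complex, norm_smul, Complex.norm_real,
    Real.norm_eq_abs, mul_pow, sq_abs]
  ring

lemma cos_arccos_re_inner_div_norm_mul_norm (x y : E) :
    Real.cos (Real.arccos ((⟪x, y⟫_ℂ).re / (‖y‖ * ‖x‖))) = (⟪x, y⟫_ℂ).re / (‖y‖ * ‖x‖) := by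
  have hre : |(⟪x, y⟫_ℂ).re| ≤ ‖y‖ * ‖x‖ :=
    calc |(⟪x, y⟫_ℂ).re| ≤ ‖⟪x, y⟫_ℂ‖ := Complex.abs_re_le_norm _
      _ ≤ ‖x‖ * ‖y‖ := norm_inner_le_norm x y
      _ = ‖y‖ * ‖x‖ := mul_comm _ _
  have hbound : |(⟪x, y⟫_ℂ).re / (‖y‖ * ‖x‖)| ≤ 1 := by
    rw [abs_div, abs_of_nonneg (mul_nonneg (norm_nonneg y) (norm_nonneg x))]
    exact div_le_one_of_le₀ hre (by positivity)
  exact Real.cos_arccos (abs_le.mp hbound).1 (abs_le.mp hbound).2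

lemma norm_ofReal_mul_exp_sub_ofReal_mul_norm {x y : E} (hx : x ≠ 0) {θ : ℝ}
    (hθ : Real.cos θ = (⟪x, y⟫_ℂ).re / (‖y‖ * ‖x‖)) (a : ℝ) :
    ‖((‖y‖ / ‖x‖ : ℝ) : ℂ) * Complex.exp (Complex.I * θ) - a‖ * ‖x‖ = ‖y - (a : ℂ) • x‖ := by
  have hx' : 0 < ‖x‖ := norm_pos_iff.mpr hx
  refine (sq_eq_sq₀ (by positivity) (norm_nonneg _)).mp ?_
  rw [mul_pow, Complex.norm_ofReal_mul_exp_sub_ofReal_sq, norm_sub_ofReal_smul_sq, hθ]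
  rcases eq_or_ne y 0 with rfl | hy
  · simp
  field_simp

end

lemma exists_unit_norm_sub_ofReal_eq_of_mem_srg {n : ℕ} {T : Matrix (Fin n) (Fin n) ℂ}
    {w : ℂ} (hw : w ∈ srg T) :
    ∃ x : EuclideanSpace ℂ (Fin n), ‖x‖ = 1 ∧
      ∀ a : ℝ, ‖w - a‖ = ‖toEuclideanLin T x - (a : ℂ) • x‖ := by
  obtain ⟨x, hx, -, hw⟩ := hw
  have hx0 : x ≠ 0 := norm_ne_zero_iff.mp (hx ▸ one_ne_zero)
  have hcos := cos_arccos_re_inner_div_norm_mul_norm x (toEuclideanLin T x)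
  refine ⟨x, hx, fun a => ?_⟩
  rcases hw with rfl | rfl
  · rw [← norm_ofReal_mul_exp_sub_ofReal_mul_norm hx0 hcos a, hx, mul_one, mul_one]
  · rw [← mul_neg, ← Complex.ofReal_neg,
      ← norm_ofReal_mul_exp_sub_ofReal_mul_norm hx0 (by rwa [Real.cos_neg]) a, hx, mul_one, mul_one]

lemma toEuclideanCLM_sub_smul_one_apply {𝕜 ι : Type*} [RCLike 𝕜] [Fintype ι] [DecidableEq ι]
    (T : Matrix ι ι 𝕜) (c : 𝕜) (x : EuclideanSpace 𝕜 ι) :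
    toEuclideanCLM (𝕜 := 𝕜) (T - c • 1) x = toEuclideanLin T x - c • x := by
  change toEuclideanLin (T - c • 1) x = _
  simp

lemma norm_sub_ofReal_le_of_mem_srg {n : ℕ} {T : Matrix (Fin n) (Fin n) ℂ} {w : ℂ}
    (hw : w ∈ srg T) (a : ℝ) :
    ‖w - a‖ ≤ ‖toEuclideanCLM (𝕜 := ℂ) (T - (a : ℂ) • (1 : Matrix (Fin n) (Fin n) ℂ))‖ := by
  obtain ⟨x, hx, hnorm⟩ := exists_unit_norm_sub_ofReal_eq_of_mem_srg hw
  rw [hnorm, ← toEuclideanCLM_sub_smul_one_apply]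
  exact ContinuousLinearMap.unit_le_opNorm _ x hx.le

theorem not_mem_srg_of_lt_dist {n : ℕ} (T : Matrix (Fin n) (Fin n) ℂ) (α : ℝ) (γ : ℂ)
    (h : ‖γ - (α : ℂ)‖ >
      ‖Matrix.toEuclideanCLM (𝕜 := ℂ) (T - (α : ℂ) • (1 : Matrix (Fin n) (Fin n) ℂ))‖) :
    γ ∉ srg T :=
  fun hγ => h.not_ge (norm_sub_ofReal_le_of_mem_srg hγ α)
end
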